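/- Let u(x,t) be a smooth velocity field on ℝ³, ρ(x,t) > 0 a smooth positive function satisfying D_t ρ + ρ(∇·u) = 0, and q(x,t), η(x,t) smooth functions satisfying D_t q = 0 and D_t η = 0, where D_t = ∂_t + u·∇. Then the vector field L_{q,η} defined by L_{q,η} f = ((∇q × ∇η)·∇f)/ρ commutes with D_t as an operator on smooth functions: D_t(L_{q,η} f) = L_{q,η}(D_t f) for all smooth f. -/

import Mathlib

noncomputable section

def p1 (f : ℝ → ℝ → ℝ → ℝ → ℝ) : ℝ → ℝ → ℝ → ℝ → ℝ :=
  fun x y z t => deriv (fun x' => f x' y z t) x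
def p2 (f : ℝ → ℝ → ℝ → ℝ → ℝ) : ℝ → ℝ → ℝ → ℝ → ℝ :=
  fun x y z t => deriv (fun y' => f x y' z t) y
def p3 (f : ℝ → ℝ → ℝ → ℝ → ℝ) : ℝ → ℝ → ℝ → ℝ → ℝ :=
  fun x y z t => deriv (fun z' => f x y z' t) z
def p4 (f : ℝ → ℝ → ℝ → ℝ → ℝ) : ℝ → ℝ → ℝ → ℝ → ℝ :=
  fun x y z t => deriv (fun t' => f x y z t') t

/-- Convective derivative `D_t f = ∂_t f + u·∇f`. -/
def Dt3 (u1 u2 u3 f : ℝ → ℝ → ℝ → ℝ → ℝ) : ℝ → ℝ → ℝ → ℝ → ℝ :=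
  fun x y z t => p4 f x y z t + u1 x y z t * p1 f x y z t + u2 x y z t * p2 f x y z t
    + u3 x y z t * p3 f x y z t

/-- `L_{q,η} f = ((∇q × ∇η) · ∇f) / ρ`. -/
def Lqeta (ρ q η f : ℝ → ℝ → ℝ → ℝ → ℝ) : ℝ → ℝ → ℝ → ℝ → ℝ :=
  fun x y z t =>
    ((p2 q x y z t * p3 η x y z t - p3 q x y z t * p2 η x y z t) * p1 f x y z t
      + (p3 q x y z t * p1 η x y z t - p1 q x y z t * p3 η x y z t) * p2 f x y z t
      + (p1 q x y z t * p2 η x y z t - p2 q x y z t * p1 η x y z t) * p3 f x y z t)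
      / ρ x y z t

namespace RelabelAux

abbrev E4 := ℝ × ℝ × ℝ × ℝ

def pd (v : E4) (G : E4 → ℝ) : E4 → ℝ := fun p => fderiv ℝ G p v

def e1 : E4 := (1,0,0,0)
def e2 : E4 := (0,1,0,0)
def e3 : E4 := (0,0,1,0)
def e4 : E4 := (0,0,0,1)

def ln4 (p₀ v : E4) : ℝ → E4 := fun s => p₀ + s • v

lemma ln4_zero (p₀ v : E4) : ln4 p₀ v 0 = p₀ := by simp [ln4]

lemma ln4_hasDerivAt (p₀ v : E4) : HasDerivAt (ln4 p₀ v) v 0 := by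
  have h : HasDerivAt (fun s : ℝ => s • v) ((1:ℝ) • v) 0 := (hasDerivAt_id 0).smul_const v
  have h2 := h.const_add p₀
  rw [one_smul] at h2
  exact h2

lemma slice_hasDerivAt (p₀ v : E4) {X : E4 → ℝ} (h : DifferentiableAt ℝ X p₀) :
    HasDerivAt (fun s => X (ln4 p₀ v s)) (pd v X p₀) 0 := by
  have h' : HasFDerivAt X (fderiv ℝ X p₀) (ln4 p₀ v 0) := by
    rw [ln4_zero]; exact h.hasFDerivAt
  exact h'.comp_hasDerivAt 0 (ln4_hasDerivAt p₀ v)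

lemma top_add_one_le : ((⊤:ℕ∞) : WithTop ℕ∞) + 1 ≤ ((⊤:ℕ∞) : WithTop ℕ∞) := by
  norm_num

lemma one_le_top : ((⊤:ℕ∞) : WithTop ℕ∞) ≠ 0 := by
  simp

lemma two_le_top : minSmoothness ℝ 2 ≤ ((⊤:ℕ∞) : WithTop ℕ∞) := by
  rw [minSmoothness_of_isRCLikeNormedField]; decide

lemma pd_contDiff {X : E4 → ℝ} (h : ContDiff ℝ (⊤:ℕ∞) X) (v : E4) :
    ContDiff ℝ (⊤:ℕ∞) (pd v X) :=
  (h.fderiv_right top_add_one_le).clm_apply contDiff_const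

lemma pd_diff {X : E4 → ℝ} (h : ContDiff ℝ (⊤:ℕ∞) X) (v : E4) :
    Differentiable ℝ (pd v X) :=
  (pd_contDiff h v).differentiable one_le_top

lemma sliceC (p₀ v : E4) {X : E4 → ℝ} (hX : ContDiff ℝ (⊤:ℕ∞) X) :
    HasDerivAt (fun s => X (ln4 p₀ v s)) (pd v X p₀) 0 :=
  slice_hasDerivAt p₀ v ((hX.differentiable one_le_top) p₀)

lemma pd_pd {X : E4 → ℝ} (h : ContDiff ℝ (⊤:ℕ∞) X) (v w : E4) (p : E4) :
    pd v (pd w X) p = fderiv ℝ (fderiv ℝ X) p v w := by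
  have hd : DifferentiableAt ℝ (fderiv ℝ X) p :=
    ((h.fderiv_right top_add_one_le).differentiable one_le_top) p
  show fderiv ℝ (fun p' => fderiv ℝ X p' w) p v = _
  rw [fderiv_clm_apply hd (differentiableAt_const w)]
  simp

lemma pd_comm {X : E4 → ℝ} (h : ContDiff ℝ (⊤:ℕ∞) X) (v w : E4) (p : E4) :
    pd v (pd w X) p = pd w (pd v X) p := by
  rw [pd_pd h v w p, pd_pd h w v p]
  exact (h.contDiffAt).isSymmSndFDerivAt two_le_top v w



def Dt (U1 U2 U3 G : E4 → ℝ) : E4 → ℝ :=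
  fun p => pd e4 G p + U1 p * pd e1 G p + U2 p * pd e2 G p + U3 p * pd e3 G p

def Lf (R Q H G : E4 → ℝ) : E4 → ℝ :=
  fun p =>
    ((pd e2 Q p * pd e3 H p - pd e3 Q p * pd e2 H p) * pd e1 G p
      + (pd e3 Q p * pd e1 H p - pd e1 Q p * pd e3 H p) * pd e2 G p
      + (pd e1 Q p * pd e2 H p - pd e2 Q p * pd e1 H p) * pd e3 G p) / R p


lemma Lf_contDiff {R Q H G : E4 → ℝ} (hR : ContDiff ℝ (⊤:ℕ∞) R)
    (hQ : ContDiff ℝ (⊤:ℕ∞) Q) (hH : ContDiff ℝ (⊤:ℕ∞) H)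
    (hG : ContDiff ℝ (⊤:ℕ∞) G) (hRne : ∀ p, R p ≠ 0) :
    ContDiff ℝ (⊤:ℕ∞) (Lf R Q H G) := by
  refine ContDiff.div ?_ hR hRne
  exact (((((pd_contDiff hQ e2).mul (pd_contDiff hH e3)).sub
      ((pd_contDiff hQ e3).mul (pd_contDiff hH e2))).mul (pd_contDiff hG e1)).add
    (((((pd_contDiff hQ e3).mul (pd_contDiff hH e1)).sub
      ((pd_contDiff hQ e1).mul (pd_contDiff hH e3))).mul (pd_contDiff hG e2)))).add
    (((((pd_contDiff hQ e1).mul (pd_contDiff hH e2)).sub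
      ((pd_contDiff hQ e2).mul (pd_contDiff hH e1))).mul (pd_contDiff hG e3)))

lemma Dt_contDiff {U1 U2 U3 G : E4 → ℝ} (hU1 : ContDiff ℝ (⊤:ℕ∞) U1)
    (hU2 : ContDiff ℝ (⊤:ℕ∞) U2) (hU3 : ContDiff ℝ (⊤:ℕ∞) U3)
    (hG : ContDiff ℝ (⊤:ℕ∞) G) : ContDiff ℝ (⊤:ℕ∞) (Dt U1 U2 U3 G) :=
  (((pd_contDiff hG e4).add (hU1.mul (pd_contDiff hG e1))).add
    (hU2.mul (pd_contDiff hG e2))).add (hU3.mul (pd_contDiff hG e3))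

theorem key (U1 U2 U3 R Q H G : E4 → ℝ)
    (hU1 : ContDiff ℝ (⊤:ℕ∞) U1) (hU2 : ContDiff ℝ (⊤:ℕ∞) U2)
    (hU3 : ContDiff ℝ (⊤:ℕ∞) U3) (hR : ContDiff ℝ (⊤:ℕ∞) R)
    (hQ : ContDiff ℝ (⊤:ℕ∞) Q) (hH : ContDiff ℝ (⊤:ℕ∞) H)
    (hG : ContDiff ℝ (⊤:ℕ∞) G) (hRpos : ∀ p, 0 < R p)
    (hcont0 : ∀ p, Dt U1 U2 U3 R p + R p * (pd e1 U1 p + pd e2 U2 p + pd e3 U3 p) = 0)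
    (hQ0 : ∀ p, Dt U1 U2 U3 Q p = 0) (hH0 : ∀ p, Dt U1 U2 U3 H p = 0) (p₀ : E4) :
    Dt U1 U2 U3 (Lf R Q H G) p₀ = Lf R Q H (Dt U1 U2 U3 G) p₀ := by
  have hRne : ∀ p, R p ≠ 0 := fun p => (hRpos p).ne'
  have hLfC : ContDiff ℝ (⊤:ℕ∞) (Lf R Q H G) := Lf_contDiff hR hQ hH hG hRne
  have hDtGC : ContDiff ℝ (⊤:ℕ∞) (Dt U1 U2 U3 G) := Dt_contDiff hU1 hU2 hU3 hG
  have EL : ∀ v : E4, pd v (Lf R Q H G) p₀ =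
      (((pd v (pd e2 Q) p₀ * pd e3 H p₀ + pd e2 Q p₀ * pd v (pd e3 H) p₀ - pd v (pd e3 Q) p₀ * pd e2 H p₀ - pd e3 Q p₀ * pd v (pd e2 H) p₀) * pd e1 G p₀ + (pd e2 Q p₀ * pd e3 H p₀ - pd e3 Q p₀ * pd e2 H p₀) * pd v (pd e1 G) p₀ + (pd v (pd e3 Q) p₀ * pd e1 H p₀ + pd e3 Q p₀ * pd v (pd e1 H) p₀ - pd v (pd e1 Q) p₀ * pd e3 H p₀ - pd e1 Q p₀ * pd v (pd e3 H) p₀) * pd e2 G p₀ + (pd e3 Q p₀ * pd e1 H p₀ - pd e1 Q p₀ * pd e3 H p₀) * pd v (pd e2 G) p₀ + (pd v (pd e1 Q) p₀ * pd e2 H p₀ + pd e1 Q p₀ * pd v (pd e2 H) p₀ - pd v (pd e2 Q) p₀ * pd e1 H p₀ - pd e2 Q p₀ * pd v (pd e1 H) p₀) * pd e3 G p₀ + (pd e1 Q p₀ * pd e2 H p₀ - pd e2 Q p₀ * pd e1 H p₀) * pd v (pd e3 G) p₀) * R p₀ - ((pd e2 Q p₀ * pd e3 H p₀ - pd e3 Q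 p₀ * pd e2 H p₀) * pd e1 G p₀ + (pd e3 Q p₀ * pd e1 H p₀ - pd e1 Q p₀ * pd e3 H p₀) * pd e2 G p₀ + (pd e1 Q p₀ * pd e2 H p₀ - pd e2 Q p₀ * pd e1 H p₀) * pd e3 G p₀) * pd v R p₀) / R p₀ ^ 2 := by
    intro v
    have h1 := (((((((sliceC p₀ v (pd_contDiff hQ e2)).mul (sliceC p₀ v (pd_contDiff hH e3))).sub ((sliceC p₀ v (pd_contDiff hQ e3)).mul (sliceC p₀ v (pd_contDiff hH e2)))).mul (sliceC p₀ v (pd_contDiff hG e1))).add ((((sliceC p₀ v (pd_contDiff hQ e3)).mul (sliceC p₀ v (pd_contDiff hH e1))).sub ((sliceC p₀ v (pd_contDiff hQ e1)).mul (sliceC p₀ v (pd_contDiff hH e3)))).mul (sliceC p₀ v (pd_contDiff hG e2)))).add ((((sliceC p₀ v (pd_contDiff hQ e1)).mul (sliceC p₀ v (pd_contDiff hH e2))).sub ((sliceC p₀ v (pd_contDiff hQ e2)).mul (sliceC p₀ v (pd_contDiff hH e1)))).mul (sliceC p₀ v (pd_contDiff hG e3)))).div (sliceC p₀ v hR) (hRne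 _))
    have h2 := (sliceC p₀ v hLfC).unique h1
    simp only [ln4_zero] at h2
    simp only [Pi.mul_apply, Pi.sub_apply, Pi.add_apply, ln4_zero] at h2
    refine h2.trans ?_
    ring
  have ER : ∀ v : E4, pd v (Dt U1 U2 U3 G) p₀ =
      pd v (pd e4 G) p₀ + (pd v U1 p₀ * pd e1 G p₀ + U1 p₀ * pd v (pd e1 G) p₀) + (pd v U2 p₀ * pd e2 G p₀ + U2 p₀ * pd v (pd e2 G) p₀) + (pd v U3 p₀ * pd e3 G p₀ + U3 p₀ * pd v (pd e3 G) p₀) := by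
    intro v
    have h1 := ((((sliceC p₀ v (pd_contDiff hG e4)).add ((sliceC p₀ v hU1).mul (sliceC p₀ v (pd_contDiff hG e1)))).add ((sliceC p₀ v hU2).mul (sliceC p₀ v (pd_contDiff hG e2)))).add ((sliceC p₀ v hU3).mul (sliceC p₀ v (pd_contDiff hG e3))))
    have h2 := (sliceC p₀ v hDtGC).unique h1
    simp only [ln4_zero] at h2
    refine h2.trans ?_
    ring
  have CQ : ∀ v : E4, pd v (pd e4 Q) p₀ = -(pd v U1 p₀ * pd e1 Q p₀ + U1 p₀ * pd v (pd e1 Q) p₀ + pd v U2 p₀ * pd e2 Q p₀ + U2 p₀ * pd v (pd e2 Q) p₀ + pd v U3 p₀ * pd e3 Q p₀ + U3 p₀ * pd v (pd e3 Q) p₀) := by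
    intro v
    have h1 := ((((sliceC p₀ v (pd_contDiff hQ e4)).add ((sliceC p₀ v hU1).mul (sliceC p₀ v (pd_contDiff hQ e1)))).add ((sliceC p₀ v hU2).mul (sliceC p₀ v (pd_contDiff hQ e2)))).add ((sliceC p₀ v hU3).mul (sliceC p₀ v (pd_contDiff hQ e3))))
    have h0 : (fun s => Dt U1 U2 U3 Q (ln4 p₀ v s)) = fun _ => (0:ℝ) :=
      funext fun s => hQ0 (ln4 p₀ v s)
    have h2 : HasDerivAt (fun s => Dt U1 U2 U3 Q (ln4 p₀ v s)) 0 0 := by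
      rw [h0]; exact hasDerivAt_const 0 0
    have h3 := h2.unique h1
    simp only [ln4_zero] at h3
    linarith [h3]
  have CH : ∀ v : E4, pd v (pd e4 H) p₀ = -(pd v U1 p₀ * pd e1 H p₀ + U1 p₀ * pd v (pd e1 H) p₀ + pd v U2 p₀ * pd e2 H p₀ + U2 p₀ * pd v (pd e2 H) p₀ + pd v U3 p₀ * pd e3 H p₀ + U3 p₀ * pd v (pd e3 H) p₀) := by
    intro v
    have h1 := ((((sliceC p₀ v (pd_contDiff hH e4)).add ((sliceC p₀ v hU1).mul (sliceC p₀ v (pd_contDiff hH e1)))).add ((sliceC p₀ v hU2).mul (sliceC p₀ v (pd_contDiff hH e2)))).add ((sliceC p₀ v hU3).mul (sliceC p₀ v (pd_contDiff hH e3))))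
    have h0 : (fun s => Dt U1 U2 U3 H (ln4 p₀ v s)) = fun _ => (0:ℝ) :=
      funext fun s => hH0 (ln4 p₀ v s)
    have h2 : HasDerivAt (fun s => Dt U1 U2 U3 H (ln4 p₀ v s)) 0 0 := by
      rw [h0]; exact hasDerivAt_const 0 0
    have h3 := h2.unique h1
    simp only [ln4_zero] at h3
    linarith [h3]
  have hRc : pd e4 R p₀ = -(U1 p₀ * pd e1 R p₀ + U2 p₀ * pd e2 R p₀
      + U3 p₀ * pd e3 R p₀
      + R p₀ * (pd e1 U1 p₀ + pd e2 U2 p₀ + pd e3 U3 p₀)) := by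
    have h := hcont0 p₀
    simp only [Dt] at h
    linarith [h]
  have tQ1 : pd e4 (pd e1 Q) p₀ = pd e1 (pd e4 Q) p₀ := pd_comm hQ e4 e1 p₀
  have tQ2 : pd e4 (pd e2 Q) p₀ = pd e2 (pd e4 Q) p₀ := pd_comm hQ e4 e2 p₀
  have tQ3 : pd e4 (pd e3 Q) p₀ = pd e3 (pd e4 Q) p₀ := pd_comm hQ e4 e3 p₀
  have sQ21 : pd e2 (pd e1 Q) p₀ = pd e1 (pd e2 Q) p₀ := pd_comm hQ e2 e1 p₀
  have sQ31 : pd e3 (pd e1 Q) p₀ = pd e1 (pd e3 Q) p₀ := pd_comm hQ e3 e1 p₀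
  have sQ32 : pd e3 (pd e2 Q) p₀ = pd e2 (pd e3 Q) p₀ := pd_comm hQ e3 e2 p₀
  have tH1 : pd e4 (pd e1 H) p₀ = pd e1 (pd e4 H) p₀ := pd_comm hH e4 e1 p₀
  have tH2 : pd e4 (pd e2 H) p₀ = pd e2 (pd e4 H) p₀ := pd_comm hH e4 e2 p₀
  have tH3 : pd e4 (pd e3 H) p₀ = pd e3 (pd e4 H) p₀ := pd_comm hH e4 e3 p₀
  have sH21 : pd e2 (pd e1 H) p₀ = pd e1 (pd e2 H) p₀ := pd_comm hH e2 e1 p₀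
  have sH31 : pd e3 (pd e1 H) p₀ = pd e1 (pd e3 H) p₀ := pd_comm hH e3 e1 p₀
  have sH32 : pd e3 (pd e2 H) p₀ = pd e2 (pd e3 H) p₀ := pd_comm hH e3 e2 p₀
  have tG1 : pd e4 (pd e1 G) p₀ = pd e1 (pd e4 G) p₀ := pd_comm hG e4 e1 p₀
  have tG2 : pd e4 (pd e2 G) p₀ = pd e2 (pd e4 G) p₀ := pd_comm hG e4 e2 p₀
  have tG3 : pd e4 (pd e3 G) p₀ = pd e3 (pd e4 G) p₀ := pd_comm hG e4 e3 p₀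
  have sG21 : pd e2 (pd e1 G) p₀ = pd e1 (pd e2 G) p₀ := pd_comm hG e2 e1 p₀
  have sG31 : pd e3 (pd e1 G) p₀ = pd e1 (pd e3 G) p₀ := pd_comm hG e3 e1 p₀
  have sG32 : pd e3 (pd e2 G) p₀ = pd e2 (pd e3 G) p₀ := pd_comm hG e3 e2 p₀
  show pd e4 (Lf R Q H G) p₀ + U1 p₀ * pd e1 (Lf R Q H G) p₀
      + U2 p₀ * pd e2 (Lf R Q H G) p₀ + U3 p₀ * pd e3 (Lf R Q H G) p₀ =
    ((pd e2 Q p₀ * pd e3 H p₀ - pd e3 Q p₀ * pd e2 H p₀) * pd e1 (Dt U1 U2 U3 G) p₀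
      + (pd e3 Q p₀ * pd e1 H p₀ - pd e1 Q p₀ * pd e3 H p₀) * pd e2 (Dt U1 U2 U3 G) p₀
      + (pd e1 Q p₀ * pd e2 H p₀ - pd e2 Q p₀ * pd e1 H p₀) * pd e3 (Dt U1 U2 U3 G) p₀) / R p₀
  rw [EL e4, EL e1, EL e2, EL e3, ER e1, ER e2, ER e3]
  simp only [tQ1, tQ2, tQ3, tH1, tH2, tH3, tG1, tG2, tG3]
  rw [CQ e1, CQ e2, CQ e3, CH e1, CH e2, CH e3, hRc]
  simp only [sQ21, sQ31, sQ32, sH21, sH31, sH32, sG21, sG31, sG32]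
  have hr := hRne p₀
  field_simp
  ring

def Fu (f : ℝ → ℝ → ℝ → ℝ → ℝ) : E4 → ℝ := fun p => f p.1 p.2.1 p.2.2.1 p.2.2.2

lemma p1_eq (g : ℝ → ℝ → ℝ → ℝ → ℝ) (hg : Differentiable ℝ (Fu g)) (a b c d : ℝ) :
    p1 g a b c d = pd e1 (Fu g) (a, b, c, d) := by
  have hl : HasDerivAt (fun s : ℝ => ((s, b, c, d) : E4)) e1 a := by
    exact (hasDerivAt_id a).prodMk (hasDerivAt_const a ((b, c, d) : ℝ × ℝ × ℝ))
  have h := (hg (a, b, c, d)).hasFDerivAt.comp_hasDerivAt a hl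
  exact h.deriv

lemma p2_eq (g : ℝ → ℝ → ℝ → ℝ → ℝ) (hg : Differentiable ℝ (Fu g)) (a b c d : ℝ) :
    p2 g a b c d = pd e2 (Fu g) (a, b, c, d) := by
  have hl : HasDerivAt (fun s : ℝ => ((a, s, c, d) : E4)) e2 b := by
    exact (hasDerivAt_const b a).prodMk
      ((hasDerivAt_id b).prodMk (hasDerivAt_const b ((c, d) : ℝ × ℝ)))
  have h := (hg (a, b, c, d)).hasFDerivAt.comp_hasDerivAt b hl
  exact h.deriv

lemma p3_eq (g : ℝ → ℝ → ℝ → ℝ → ℝ) (hg : Differentiable ℝ (Fu g)) (a b c d : ℝ) :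
    p3 g a b c d = pd e3 (Fu g) (a, b, c, d) := by
  have hl : HasDerivAt (fun s : ℝ => ((a, b, s, d) : E4)) e3 c := by
    exact (hasDerivAt_const c a).prodMk ((hasDerivAt_const c b).prodMk
      ((hasDerivAt_id c).prodMk (hasDerivAt_const c d)))
  have h := (hg (a, b, c, d)).hasFDerivAt.comp_hasDerivAt c hl
  exact h.deriv

lemma p4_eq (g : ℝ → ℝ → ℝ → ℝ → ℝ) (hg : Differentiable ℝ (Fu g)) (a b c d : ℝ) :
    p4 g a b c d = pd e4 (Fu g) (a, b, c, d) := by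
  have hl : HasDerivAt (fun s : ℝ => ((a, b, c, s) : E4)) e4 d := by
    exact (hasDerivAt_const d a).prodMk ((hasDerivAt_const d b).prodMk
      ((hasDerivAt_const d c).prodMk (hasDerivAt_id d)))
  have h := (hg (a, b, c, d)).hasFDerivAt.comp_hasDerivAt d hl
  exact h.deriv

lemma Fu_Lqeta (ρ q η g : ℝ → ℝ → ℝ → ℝ → ℝ)
    (dq : Differentiable ℝ (Fu q)) (dη : Differentiable ℝ (Fu η))
    (dg : Differentiable ℝ (Fu g)) :
    Fu (Lqeta ρ q η g) = Lf (Fu ρ) (Fu q) (Fu η) (Fu g) := by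
  funext p
  obtain ⟨a, b, c, d⟩ := p
  show Lqeta ρ q η g a b c d = _
  simp only [Lqeta, Lf]
  rw [p1_eq q dq, p2_eq q dq, p3_eq q dq, p1_eq η dη, p2_eq η dη, p3_eq η dη,
    p1_eq g dg, p2_eq g dg, p3_eq g dg]
  rfl

lemma Fu_Dt3 (u1 u2 u3 g : ℝ → ℝ → ℝ → ℝ → ℝ) (dg : Differentiable ℝ (Fu g)) :
    Fu (Dt3 u1 u2 u3 g) = Dt (Fu u1) (Fu u2) (Fu u3) (Fu g) := by
  funext p
  obtain ⟨a, b, c, d⟩ := p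
  show Dt3 u1 u2 u3 g a b c d = _
  simp only [Dt3, Dt]
  rw [p1_eq g dg, p2_eq g dg, p3_eq g dg, p4_eq g dg]
  rfl

end RelabelAux

theorem relabeling_field_commutes_3d
    (u1 u2 u3 ρ q η : ℝ → ℝ → ℝ → ℝ → ℝ)
    (hu1 : ContDiff ℝ (⊤ : ℕ∞) (fun p : ℝ × ℝ × ℝ × ℝ => u1 p.1 p.2.1 p.2.2.1 p.2.2.2))
    (hu2 : ContDiff ℝ (⊤ : ℕ∞) (fun p : ℝ × ℝ × ℝ × ℝ => u2 p.1 p.2.1 p.2.2.1 p.2.2.2))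
    (hu3 : ContDiff ℝ (⊤ : ℕ∞) (fun p : ℝ × ℝ × ℝ × ℝ => u3 p.1 p.2.1 p.2.2.1 p.2.2.2))
    (hρ : ContDiff ℝ (⊤ : ℕ∞) (fun p : ℝ × ℝ × ℝ × ℝ => ρ p.1 p.2.1 p.2.2.1 p.2.2.2))
    (hq : ContDiff ℝ (⊤ : ℕ∞) (fun p : ℝ × ℝ × ℝ × ℝ => q p.1 p.2.1 p.2.2.1 p.2.2.2))
    (hη : ContDiff ℝ (⊤ : ℕ∞) (fun p : ℝ × ℝ × ℝ × ℝ => η p.1 p.2.1 p.2.2.1 p.2.2.2))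
    (hpos : ∀ x y z t : ℝ, 0 < ρ x y z t)
    (hcont : ∀ x y z t : ℝ,
      Dt3 u1 u2 u3 ρ x y z t
        + ρ x y z t * (p1 u1 x y z t + p2 u2 x y z t + p3 u3 x y z t) = 0)
    (hqcons : ∀ x y z t : ℝ, Dt3 u1 u2 u3 q x y z t = 0)
    (hηcons : ∀ x y z t : ℝ, Dt3 u1 u2 u3 η x y z t = 0) :
    ∀ f : ℝ → ℝ → ℝ → ℝ → ℝ,
      ContDiff ℝ (⊤ : ℕ∞) (fun p : ℝ × ℝ × ℝ × ℝ => f p.1 p.2.1 p.2.2.1 p.2.2.2) →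
      ∀ x y z t : ℝ,
        Dt3 u1 u2 u3 (Lqeta ρ q η f) x y z t = Lqeta ρ q η (Dt3 u1 u2 u3 f) x y z t := by
  intro f hf x y z t
  open RelabelAux in
  (
  have hu1' : ContDiff ℝ (⊤:ℕ∞) (Fu u1) := hu1.of_le (by simp)
  have hu2' : ContDiff ℝ (⊤:ℕ∞) (Fu u2) := hu2.of_le (by simp)
  have hu3' : ContDiff ℝ (⊤:ℕ∞) (Fu u3) := hu3.of_le (by simp)
  have hρ' : ContDiff ℝ (⊤:ℕ∞) (Fu ρ) := hρ.of_le (by simp)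
  have hq' : ContDiff ℝ (⊤:ℕ∞) (Fu q) := hq.of_le (by simp)
  have hη' : ContDiff ℝ (⊤:ℕ∞) (Fu η) := hη.of_le (by simp)
  have hf' : ContDiff ℝ (⊤:ℕ∞) (Fu f) := hf.of_le (by simp)
  have du1 : Differentiable ℝ (Fu u1) := hu1'.differentiable one_le_top
  have du2 : Differentiable ℝ (Fu u2) := hu2'.differentiable one_le_top
  have du3 : Differentiable ℝ (Fu u3) := hu3'.differentiable one_le_top
  have dρ : Differentiable ℝ (Fu ρ) := hρ'.differentiable one_le_top
  have dq : Differentiable ℝ (Fu q) := hq'.differentiable one_le_top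
  have dη : Differentiable ℝ (Fu η) := hη'.differentiable one_le_top
  have df : Differentiable ℝ (Fu f) := hf'.differentiable one_le_top
  have hρpos : ∀ p : E4, 0 < Fu ρ p := fun p => hpos p.1 p.2.1 p.2.2.1 p.2.2.2
  have hρne : ∀ p : E4, Fu ρ p ≠ 0 := fun p => (hρpos p).ne'
  have hDf : Fu (Dt3 u1 u2 u3 f) = Dt (Fu u1) (Fu u2) (Fu u3) (Fu f) :=
    Fu_Dt3 u1 u2 u3 f df
  have dDf : Differentiable ℝ (Fu (Dt3 u1 u2 u3 f)) := by
    rw [hDf]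
    exact (Dt_contDiff hu1' hu2' hu3' hf').differentiable one_le_top
  have hL : Fu (Lqeta ρ q η f) = Lf (Fu ρ) (Fu q) (Fu η) (Fu f) :=
    Fu_Lqeta ρ q η f dq dη df
  have dL : Differentiable ℝ (Fu (Lqeta ρ q η f)) := by
    rw [hL]
    exact (Lf_contDiff hρ' hq' hη' hf' hρne).differentiable one_le_top
  have hcont0 : ∀ p : E4, Dt (Fu u1) (Fu u2) (Fu u3) (Fu ρ) p
      + Fu ρ p * (pd e1 (Fu u1) p + pd e2 (Fu u2) p + pd e3 (Fu u3) p) = 0 := by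
    rintro ⟨a, b, c, d⟩
    rw [← Fu_Dt3 u1 u2 u3 ρ dρ, ← p1_eq u1 du1, ← p2_eq u2 du2, ← p3_eq u3 du3]
    exact hcont a b c d
  have hQ0 : ∀ p : E4, Dt (Fu u1) (Fu u2) (Fu u3) (Fu q) p = 0 := by
    intro p
    rw [← Fu_Dt3 u1 u2 u3 q dq]
    exact hqcons p.1 p.2.1 p.2.2.1 p.2.2.2
  have hH0 : ∀ p : E4, Dt (Fu u1) (Fu u2) (Fu u3) (Fu η) p = 0 := by
    intro p
    rw [← Fu_Dt3 u1 u2 u3 η dη]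
    exact hηcons p.1 p.2.1 p.2.2.1 p.2.2.2
  have hkey := key (Fu u1) (Fu u2) (Fu u3) (Fu ρ) (Fu q) (Fu η) (Fu f)
    hu1' hu2' hu3' hρ' hq' hη' hf' hρpos hcont0 hQ0 hH0 (x, y, z, t)
  calc Dt3 u1 u2 u3 (Lqeta ρ q η f) x y z t
      = Fu (Dt3 u1 u2 u3 (Lqeta ρ q η f)) (x, y, z, t) := rfl
    _ = Dt (Fu u1) (Fu u2) (Fu u3) (Fu (Lqeta ρ q η f)) (x, y, z, t) :=
        congrFun (Fu_Dt3 u1 u2 u3 (Lqeta ρ q η f) dL) (x, y, z, t)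
    _ = Dt (Fu u1) (Fu u2) (Fu u3) (Lf (Fu ρ) (Fu q) (Fu η) (Fu f)) (x, y, z, t) := by
        rw [hL]
    _ = Lf (Fu ρ) (Fu q) (Fu η) (Dt (Fu u1) (Fu u2) (Fu u3) (Fu f)) (x, y, z, t) := hkey
    _ = Lf (Fu ρ) (Fu q) (Fu η) (Fu (Dt3 u1 u2 u3 f)) (x, y, z, t) := by rw [hDf]
    _ = Fu (Lqeta ρ q η (Dt3 u1 u2 u3 f)) (x, y, z, t) :=
        (congrFun (Fu_Lqeta ρ q η (Dt3 u1 u2 u3 f) dq dη dDf) (x, y, z, t)).symm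
    _ = Lqeta ρ q η (Dt3 u1 u2 u3 f) x y z t := rfl
  )
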